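/- (Strict decrease unless fixed) If θ_{t+1} is the Jeffrey posterior of θ_t and θ_{t+1} ≠ θ_t, then D_KL(τ || p_{θ_{t+1}}) + D_KL(θ_{t+1} || θ_t) ≤ D_KL(τ || p_{θ_t}); in particular D_KL(τ || p_{θ_{t+1}}) < D_KL(τ || p_{θ_t}) whenever θ_{t+1} ≠ θ_t. -/

import Mathlib

open Finset Real

/-!
Write `q` for the joint posterior `q(x, y) = τ y θ x C x y / p_θ y` and `m` for the same object
built from `θ' = Σ_y q(·, y)`. Because `q(·, y)` sums to `τ y`, `q(x, ·)` sums to `θ' x`, and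
`q / m = (τ / p_θ) / (τ / p_θ') / (θ' / θ)` on the support of `q`, the gap
`D(τ ‖ p_θ) - D(τ ‖ p_θ') - D(θ' ‖ θ)` equals `D(q ‖ m)`. Gibbs' inequality for unnormalised weights
gives `D(q ‖ m) ≥ Σ q - Σ m ≥ 0`, since `m(·, y)` sums to `τ y` or to `0`. Strictness comes from
`D(θ' ‖ θ) > 0` for the two distinct probability vectors `θ'` and `θ`.
-/

noncomputable def relEntropy {ι : Type*} [Fintype ι] (a b : ι → ℝ) : ℝ :=
  ∑ i, a i * log (a i / b i)

section Gibbs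

open InformationTheory

variable {a b : ℝ}

lemma mul_klFun_div (hb : b ≠ 0) : b * klFun (a / b) = a * log (a / b) + b - a := by
  rw [klFun_apply]
  field_simp

lemma sub_le_mul_log_div (ha : 0 ≤ a) (hb : 0 ≤ b) (hab : b = 0 → a = 0) :
    a - b ≤ a * log (a / b) := by
  rcases hb.eq_or_lt with rfl | hb
  · simp [hab rfl]
  · have := mul_nonneg hb.le (klFun_nonneg (div_nonneg ha hb.le))
    rw [mul_klFun_div hb.ne'] at this
    linarith

lemma sub_lt_mul_log_div (ha : 0 ≤ a) (hb : 0 ≤ b) (hab : b = 0 → a = 0) (hne : a ≠ b) :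
    a - b < a * log (a / b) := by
  rcases hb.eq_or_lt with rfl | hb
  · exact absurd (hab rfl) hne
  · have hkl : klFun (a / b) ≠ 0 := by
      rwa [Ne, klFun_eq_zero_iff (div_nonneg ha hb.le), div_eq_one_iff_eq hb.ne']
    have := mul_pos hb ((klFun_nonneg (div_nonneg ha hb.le)).lt_of_ne' hkl)
    rw [mul_klFun_div hb.ne'] at this
    linarith

variable {ι : Type*} [Fintype ι] {a b : ι → ℝ}

lemma sum_sub_sum_le_relEntropy (ha : ∀ i, 0 ≤ a i) (hb : ∀ i, 0 ≤ b i)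
    (hab : ∀ i, b i = 0 → a i = 0) : ∑ i, a i - ∑ i, b i ≤ relEntropy a b := by
  rw [← sum_sub_distrib]
  exact sum_le_sum fun i _ => sub_le_mul_log_div (ha i) (hb i) (hab i)

lemma relEntropy_pos_of_sum_eq (ha : ∀ i, 0 ≤ a i) (hb : ∀ i, 0 ≤ b i)
    (hab : ∀ i, b i = 0 → a i = 0) (hsum : ∑ i, a i = ∑ i, b i) (hne : a ≠ b) :
    0 < relEntropy a b := by
  obtain ⟨i, hi⟩ := Function.ne_iff.mp hne
  have := sum_lt_sum (fun j _ => sub_le_mul_log_div (ha j) (hb j) (hab j))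
    ⟨i, mem_univ i, sub_lt_mul_log_div (ha i) (hb i) (hab i) hi⟩
  rwa [sum_sub_distrib, hsum, sub_self] at this

end Gibbs

section Jeffrey

variable {X Y : Type*} [Fintype X]

def outputDist (C : X → Y → ℝ) (θ : X → ℝ) (y : Y) : ℝ := ∑ x, θ x * C x y

noncomputable def jointPosterior (C : X → Y → ℝ) (τ : Y → ℝ) (θ : X → ℝ) (z : X × Y) : ℝ :=
  τ z.2 * (θ z.1 * C z.1 z.2 / outputDist C θ z.2)

variable {C : X → Y → ℝ} {τ : Y → ℝ} {θ : X → ℝ}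

lemma outputDist_nonneg (hC : ∀ x y, 0 ≤ C x y) (hθ : ∀ x, 0 ≤ θ x) (y : Y) :
    0 ≤ outputDist C θ y :=
  sum_nonneg fun x _ => mul_nonneg (hθ x) (hC x y)

lemma jointPosterior_nonneg (hC : ∀ x y, 0 ≤ C x y) (hτ : ∀ y, 0 ≤ τ y) (hθ : ∀ x, 0 ≤ θ x)
    (z : X × Y) : 0 ≤ jointPosterior C τ θ z :=
  mul_nonneg (hτ _) (div_nonneg (mul_nonneg (hθ _) (hC _ _)) (outputDist_nonneg hC hθ _))

lemma jointPosterior_ne_zero_iff {x : X} {y : Y} :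
    jointPosterior C τ θ (x, y) ≠ 0 ↔
      τ y ≠ 0 ∧ θ x ≠ 0 ∧ C x y ≠ 0 ∧ outputDist C θ y ≠ 0 := by
  simp [jointPosterior, and_assoc]

lemma sum_jointPosterior_eq_of_ne_zero {y : Y} (hy : outputDist C θ y ≠ 0) :
    ∑ x, jointPosterior C τ θ (x, y) = τ y :=
  calc ∑ x, jointPosterior C τ θ (x, y) = τ y * (outputDist C θ y / outputDist C θ y) := by
        simp only [jointPosterior, ← mul_sum, ← sum_div]; rfl
    _ = τ y := by rw [div_self hy, mul_one]

lemma sum_jointPosterior_eq (habs : ∀ y, outputDist C θ y = 0 → τ y = 0) (y : Y) :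
    ∑ x, jointPosterior C τ θ (x, y) = τ y := by
  by_cases hy : outputDist C θ y = 0
  · simp [jointPosterior, hy, habs y hy]
  · exact sum_jointPosterior_eq_of_ne_zero hy

lemma sum_jointPosterior_le (hτ : ∀ y, 0 ≤ τ y) (y : Y) :
    ∑ x, jointPosterior C τ θ (x, y) ≤ τ y := by
  by_cases hy : outputDist C θ y = 0
  · simp [jointPosterior, hy, hτ y]
  · exact (sum_jointPosterior_eq_of_ne_zero hy).le

variable [Fintype Y]

variable (C τ θ) in
noncomputable def jeffreyUpdate (x : X) : ℝ := ∑ y, jointPosterior C τ θ (x, y)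

lemma jeffreyUpdate_nonneg (hC : ∀ x y, 0 ≤ C x y) (hτ : ∀ y, 0 ≤ τ y) (hθ : ∀ x, 0 ≤ θ x)
    (x : X) : 0 ≤ jeffreyUpdate C τ θ x :=
  sum_nonneg fun _ _ => jointPosterior_nonneg hC hτ hθ _

lemma jeffreyUpdate_eq_zero_of_eq_zero {x : X} (hx : θ x = 0) : jeffreyUpdate C τ θ x = 0 := by
  simp [jeffreyUpdate, jointPosterior, hx]

lemma sum_jeffreyUpdate (habs : ∀ y, outputDist C θ y = 0 → τ y = 0) :
    ∑ x, jeffreyUpdate C τ θ x = ∑ y, τ y := by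
  simp only [jeffreyUpdate]
  rw [sum_comm]
  exact sum_congr rfl fun y _ => sum_jointPosterior_eq habs y

lemma jeffreyUpdate_pos_of_jointPosterior_ne_zero (hC : ∀ x y, 0 ≤ C x y) (hτ : ∀ y, 0 ≤ τ y)
    (hθ : ∀ x, 0 ≤ θ x) {x : X} {y : Y} (h : jointPosterior C τ θ (x, y) ≠ 0) :
    0 < jeffreyUpdate C τ θ x :=
  ((jointPosterior_nonneg hC hτ hθ _).lt_of_ne' h).trans_le
    (single_le_sum (fun y _ => jointPosterior_nonneg hC hτ hθ (x, y)) (mem_univ y))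

lemma outputDist_jeffreyUpdate_pos_of_jointPosterior_ne_zero (hC : ∀ x y, 0 ≤ C x y)
    (hτ : ∀ y, 0 ≤ τ y) (hθ : ∀ x, 0 ≤ θ x) {x : X} {y : Y}
    (h : jointPosterior C τ θ (x, y) ≠ 0) : 0 < outputDist C (jeffreyUpdate C τ θ) y :=
  (mul_pos (jeffreyUpdate_pos_of_jointPosterior_ne_zero hC hτ hθ h)
    ((hC x y).lt_of_ne' (jointPosterior_ne_zero_iff.1 h).2.2.1)).trans_le <|
      single_le_sum (fun x _ => mul_nonneg (jeffreyUpdate_nonneg hC hτ hθ x) (hC x y)) (mem_univ x)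

lemma jointPosterior_jeffreyUpdate_ne_zero (hC : ∀ x y, 0 ≤ C x y) (hτ : ∀ y, 0 ≤ τ y)
    (hθ : ∀ x, 0 ≤ θ x) {x : X} {y : Y} (h : jointPosterior C τ θ (x, y) ≠ 0) :
    jointPosterior C τ (jeffreyUpdate C τ θ) (x, y) ≠ 0 := by
  obtain ⟨hτy, -, hCxy, -⟩ := jointPosterior_ne_zero_iff.1 h
  exact jointPosterior_ne_zero_iff.2
    ⟨hτy, (jeffreyUpdate_pos_of_jointPosterior_ne_zero hC hτ hθ h).ne', hCxy,
      (outputDist_jeffreyUpdate_pos_of_jointPosterior_ne_zero hC hτ hθ h).ne'⟩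

lemma jointPosterior_mul_log_div (hC : ∀ x y, 0 ≤ C x y) (hτ : ∀ y, 0 ≤ τ y)
    (hθ : ∀ x, 0 ≤ θ x) (x : X) (y : Y) :
    jointPosterior C τ θ (x, y) *
        log (jointPosterior C τ θ (x, y) / jointPosterior C τ (jeffreyUpdate C τ θ) (x, y)) =
      jointPosterior C τ θ (x, y) *
        (log (τ y / outputDist C θ y) - log (τ y / outputDist C (jeffreyUpdate C τ θ) y) -
          log (jeffreyUpdate C τ θ x / θ x)) := by
  by_cases h : jointPosterior C τ θ (x, y) = 0
  · simp [h]
  obtain ⟨hτy, hθx, hCxy, hp⟩ := jointPosterior_ne_zero_iff.1 h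
  have hθ'x := (jeffreyUpdate_pos_of_jointPosterior_ne_zero hC hτ hθ h).ne'
  have hp' := (outputDist_jeffreyUpdate_pos_of_jointPosterior_ne_zero hC hτ hθ h).ne'
  have hratio : jointPosterior C τ θ (x, y) / jointPosterior C τ (jeffreyUpdate C τ θ) (x, y) =
      τ y / outputDist C θ y / (τ y / outputDist C (jeffreyUpdate C τ θ) y) /
        (jeffreyUpdate C τ θ x / θ x) := by
    simp only [jointPosterior]
    field_simp
  rw [hratio, log_div (by positivity) (by positivity), log_div (by positivity) (by positivity)]

theorem relEntropy_jointPosterior_eq (hC : ∀ x y, 0 ≤ C x y) (hτ : ∀ y, 0 ≤ τ y)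
    (hθ : ∀ x, 0 ≤ θ x) (habs : ∀ y, outputDist C θ y = 0 → τ y = 0) :
    relEntropy (jointPosterior C τ θ) (jointPosterior C τ (jeffreyUpdate C τ θ)) =
      relEntropy τ (outputDist C θ) - relEntropy τ (outputDist C (jeffreyUpdate C τ θ)) -
        relEntropy (jeffreyUpdate C τ θ) θ := by
  have hY (f : Y → ℝ) : ∑ x, ∑ y, jointPosterior C τ θ (x, y) * f y = ∑ y, τ y * f y := by
    rw [sum_comm]
    simp only [← sum_mul, sum_jointPosterior_eq habs]
  have hX (f : X → ℝ) :
      ∑ x, ∑ y, jointPosterior C τ θ (x, y) * f x = ∑ x, jeffreyUpdate C τ θ x * f x := by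
    simp only [← sum_mul, jeffreyUpdate]
  simp only [relEntropy, Fintype.sum_prod_type, jointPosterior_mul_log_div hC hτ hθ, mul_sub,
    sum_sub_distrib, hY, hX]

theorem relEntropy_outputDist_jeffreyUpdate_add_le (hC : ∀ x y, 0 ≤ C x y) (hτ : ∀ y, 0 ≤ τ y)
    (hθ : ∀ x, 0 ≤ θ x) (habs : ∀ y, outputDist C θ y = 0 → τ y = 0) :
    relEntropy τ (outputDist C (jeffreyUpdate C τ θ)) + relEntropy (jeffreyUpdate C τ θ) θ ≤
      relEntropy τ (outputDist C θ) := by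
  have hgibbs := sum_sub_sum_le_relEntropy (jointPosterior_nonneg hC hτ hθ)
    (jointPosterior_nonneg hC hτ (jeffreyUpdate_nonneg hC hτ hθ))
    (fun z => not_imp_not.1 (jointPosterior_jeffreyUpdate_ne_zero hC hτ hθ))
  have hmass : ∑ z, jointPosterior C τ (jeffreyUpdate C τ θ) z ≤ ∑ z, jointPosterior C τ θ z := by
    simp only [Fintype.sum_prod_type]
    rw [sum_comm, sum_comm (f := fun x y => jointPosterior C τ θ (x, y))]
    exact sum_le_sum fun y _ => (sum_jointPosterior_le hτ y).trans (sum_jointPosterior_eq habs y).ge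
  rw [relEntropy_jointPosterior_eq hC hτ hθ habs] at hgibbs
  linarith

end Jeffrey

theorem jeffrey_strict_decrease_general
    {X Y : Type} [Fintype X] [Fintype Y]
    (C : X → Y → ℝ) (hC : ∀ x y, 0 ≤ C x y)
    (τ : Y → ℝ) (hτ : ∀ y, 0 ≤ τ y) (hτ1 : ∑ y, τ y = 1)
    (θt : X → ℝ) (hθt : ∀ x, 0 ≤ θt x) (hθt1 : ∑ x, θt x = 1)
    (hpos : ∀ y, 0 < τ y → 0 < ∑ x, θt x * C x y)
    (θt1 : X → ℝ)
    (hθt1def : ∀ x, θt1 x = ∑ y, τ y * (θt x * C x y / (∑ x', θt x' * C x' y)))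
    (hne : θt1 ≠ θt) :
    ((∑ y, τ y * Real.log (τ y / (∑ x, θt1 x * C x y)))
        + (∑ x, θt1 x * Real.log (θt1 x / θt x))
      ≤ (∑ y, τ y * Real.log (τ y / (∑ x, θt x * C x y))))
    ∧ (∑ y, τ y * Real.log (τ y / (∑ x, θt1 x * C x y)))
      < (∑ y, τ y * Real.log (τ y / (∑ x, θt x * C x y))) := by
  obtain rfl : θt1 = jeffreyUpdate C τ θt := funext hθt1def
  have habs (y : Y) (hy : outputDist C θt y = 0) : τ y = 0 :=
    (hτ y).antisymm' (not_lt.1 fun hτy => (hpos y hτy).ne' hy)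
  have hdecrease := relEntropy_outputDist_jeffreyUpdate_add_le hC hτ hθt habs
  have hgap : 0 < relEntropy (jeffreyUpdate C τ θt) θt :=
    relEntropy_pos_of_sum_eq (jeffreyUpdate_nonneg hC hτ hθt) hθt
      (fun _ => jeffreyUpdate_eq_zero_of_eq_zero) (by rw [sum_jeffreyUpdate habs, hτ1, hθt1]) hne
  exact ⟨hdecrease, (lt_add_of_pos_right _ hgap).trans_le hdecrease⟩

theorem jeffrey_strict_decrease
    {X Y : Type} [Fintype X] [Fintype Y]
    (C : X → Y → ℝ) (hC : ∀ x y, 0 ≤ C x y) (hCrow : ∀ x, ∑ y, C x y = 1)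
    (τ : Y → ℝ) (hτ : ∀ y, 0 ≤ τ y) (hτ1 : ∑ y, τ y = 1)
    (θt : X → ℝ) (hθt : ∀ x, 0 ≤ θt x) (hθt1 : ∑ x, θt x = 1)
    (hpos : ∀ y, 0 < τ y → 0 < ∑ x, θt x * C x y)
    (θt1 : X → ℝ)
    (hθt1def : ∀ x, θt1 x = ∑ y, τ y * (θt x * C x y / (∑ x', θt x' * C x' y)))
    (hne : θt1 ≠ θt) :
    ((∑ y, τ y * Real.log (τ y / (∑ x, θt1 x * C x y)))
        + (∑ x, θt1 x * Real.log (θt1 x / θt x))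
      ≤ (∑ y, τ y * Real.log (τ y / (∑ x, θt x * C x y))))
    ∧ (∑ y, τ y * Real.log (τ y / (∑ x, θt1 x * C x y)))
      < (∑ y, τ y * Real.log (τ y / (∑ x, θt x * C x y))) :=
  jeffrey_strict_decrease_general C hC τ hτ hτ1 θt hθt hθt1 hpos θt1 hθt1def hne
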